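/- Let X be a Hausdorff uniform space and let μ be a continuous linear functional on the Banach space UCb(X) of bounded uniformly continuous complex-valued functions on X with the supremum norm. If ⟨μ, e^{if}⟩ = 0 for every uniformly continuous function f : X → ℝ, then μ = 0. (Equivalently: the Fourier transform F : M(X) → ℓ^∞(UC(X,ℝ)), (Fμ)(f) = ⟨μ, e^{if}⟩, is injective.) -/

import Mathlib

/-!
If `μ` kills `e^{itu}` for every real `t`, differentiating at `t = 0` gives `i⟨μ, u⟩ = 0`:
the curve `t ↦ e^{itu}` in `UCb(X)` is differentiable at `0` with derivative `iu`, because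
`|e^{iθ} - 1 - iθ| ≤ θ²` for `|θ| ≤ 1` and `u` is bounded. So `μ` vanishes on real-valued
functions, hence on all of `UCb(X)` by splitting into real and imaginary parts.
-/

open Complex

noncomputable section

/-- The function `t ↦ e^{it}` is uniformly continuous on `ℝ`. -/
lemma uniformContinuous_exp_mul_I :
    UniformContinuous fun t : ℝ => Complex.exp (t * Complex.I) := by
  rw [Metric.uniformContinuous_iff]
  intro ε hε
  refine ⟨min 1 (ε / 2), by positivity, fun {a b} h => ?_⟩
  have hab1 : |a - b| ≤ 1 := by
    have := (lt_min_iff.mp (by simpa [Real.dist_eq] using h)).1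
    linarith [abs_nonneg (a - b), this]
  have key : ‖Complex.exp ((↑(a - b)) * Complex.I) - 1‖ ≤ 2 * |a - b| := by
    have h1 : ‖(↑(a - b) : ℂ) * Complex.I‖ = |a - b| := by
      rw [norm_mul, Complex.norm_I, mul_one, Complex.norm_real, Real.norm_eq_abs]
    have h2 := Complex.norm_exp_sub_one_le (x := (↑(a - b)) * Complex.I)
      (by rw [h1]; exact hab1)
    rw [h1] at h2
    exact h2
  have hfactor : Complex.exp (↑a * Complex.I) - Complex.exp (↑b * Complex.I)
      = Complex.exp (↑b * Complex.I) * (Complex.exp ((↑(a - b)) * Complex.I) - 1) := by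
    rw [mul_sub, mul_one, ← Complex.exp_add]
    push_cast
    ring_nf
  have habε : |a - b| < ε / 2 := by
    have := (lt_min_iff.mp (by simpa [Real.dist_eq] using h)).2
    exact this
  calc dist (Complex.exp (↑a * Complex.I)) (Complex.exp (↑b * Complex.I))
      = ‖Complex.exp (↑a * Complex.I) - Complex.exp (↑b * Complex.I)‖ := by
        rw [Complex.dist_eq]
    _ = ‖Complex.exp (↑b * Complex.I)‖ *
          ‖Complex.exp ((↑(a - b)) * Complex.I) - 1‖ := by
        rw [hfactor, norm_mul]
    _ ≤ 2 * |a - b| := by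
        rw [Complex.norm_exp_ofReal_mul_I, one_mul]; exact key
    _ < ε := by linarith

variable (X : Type*) [UniformSpace X]

/-- The space `UCb(X)` of bounded uniformly continuous complex-valued functions on a
uniform space `X`, realized as a (closed) subspace of the Banach space of bounded
continuous functions, so that it is itself a Banach space with the supremum norm. -/
def UCb : Submodule ℂ (BoundedContinuousFunction X ℂ) where
  carrier := {f | UniformContinuous f}
  add_mem' := by
    intro f g hf hg
    exact ((hf : UniformContinuous f).add (hg : UniformContinuous g))
  zero_mem' := by
    exact (uniformContinuous_const : UniformContinuous fun _ : X => (0 : ℂ))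
  smul_mem' := by
    intro c f hf
    exact ((hf : UniformContinuous f).const_smul c)

variable {X}

/-- For a uniformly continuous function `f : X → ℝ`, the element `e^{if}` of `UCb(X)`. -/
def expICf {f : X → ℝ} (hf : UniformContinuous f) : UCb X :=
  ⟨BoundedContinuousFunction.ofNormedAddCommGroup
      (fun x => Complex.exp ((f x : ℂ) * Complex.I))
      ((uniformContinuous_exp_mul_I.comp hf).continuous) 1
      (fun x => le_of_eq (Complex.norm_exp_ofReal_mul_I (f x))),
   by exact (uniformContinuous_exp_mul_I.comp hf)⟩

open scoped BoundedContinuousFunction Topology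

namespace UCb

def re (g : UCb X) : X →ᵇ ℝ :=
  (g : X →ᵇ ℂ).comp Complex.re Complex.reCLM.lipschitz

def im (g : UCb X) : X →ᵇ ℝ :=
  (g : X →ᵇ ℂ).comp Complex.im Complex.imCLM.lipschitz

theorem uniformContinuous_re (g : UCb X) : UniformContinuous (re g) :=
  Complex.reCLM.uniformContinuous.comp g.2

theorem uniformContinuous_im (g : UCb X) : UniformContinuous (im g) :=
  Complex.imCLM.uniformContinuous.comp g.2

def ofReal (u : X →ᵇ ℝ) (hu : UniformContinuous u) : UCb X :=
  ⟨(u.comp ((↑) : ℝ → ℂ) Complex.isometry_ofReal.lipschitz),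
    Complex.isometry_ofReal.uniformContinuous.comp hu⟩

@[simp]
theorem ofReal_apply (u : X →ᵇ ℝ) (hu : UniformContinuous u) (x : X) :
    (ofReal u hu : X →ᵇ ℂ) x = u x :=
  rfl

theorem eq_ofReal_re_add_I_smul_ofReal_im (g : UCb X) :
    g = ofReal (re g) (uniformContinuous_re g) +
      I • ofReal (im g) (uniformContinuous_im g) := by
  ext x
  simpa [re, im, mul_comm] using (Complex.re_add_im ((g : X →ᵇ ℂ) x)).symm

end UCb

theorem norm_exp_ofReal_mul_I_sub_one_sub_le {θ : ℝ} (hθ : |θ| ≤ 1) :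
    ‖exp (θ * I) - 1 - θ * I‖ ≤ θ ^ 2 := by
  have hnorm : ‖(θ : ℂ) * I‖ = |θ| := by simp
  have := Complex.norm_exp_sub_one_sub_id_le (hnorm.trans_le hθ)
  rwa [hnorm, sq_abs] at this

theorem norm_expICf_smul_sub_le {u : X →ᵇ ℝ} (hu : UniformContinuous u) {t : ℝ}
    (ht : |t| * ‖u‖ ≤ 1) :
    ‖expICf (hu.const_smul t) - expICf (hu.const_smul (0 : ℝ)) -
        t • I • UCb.ofReal u hu‖ ≤ ‖u‖ ^ 2 * t ^ 2 := by
  rw [Submodule.coe_norm, BoundedContinuousFunction.norm_le (by positivity)]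
  intro x
  have hux : |t * u x| ≤ |t| * ‖u‖ := by
    rw [abs_mul]
    exact mul_le_mul_of_nonneg_left (u.norm_coe_le_norm x) (abs_nonneg t)
  calc _ = ‖exp ((t * u x : ℝ) * I) - 1 - (t * u x : ℝ) * I‖ := by
        simp [expICf, mul_assoc, mul_comm I]
    _ ≤ (t * u x) ^ 2 := norm_exp_ofReal_mul_I_sub_one_sub_le (hux.trans ht)
    _ ≤ (|t| * ‖u‖) ^ 2 := by
        rw [← sq_abs]
        exact pow_le_pow_left₀ (abs_nonneg _) hux 2
    _ = ‖u‖ ^ 2 * t ^ 2 := by rw [mul_pow, sq_abs, mul_comm]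

theorem hasDerivAt_expICf_smul {u : X →ᵇ ℝ} (hu : UniformContinuous u) :
    HasDerivAt (fun t : ℝ => expICf (hu.const_smul t)) (I • UCb.ofReal u hu) 0 := by
  rw [hasDerivAt_iff_isLittleO]
  simp only [sub_zero]
  refine Asymptotics.IsBigO.trans_isLittleO ?_ (Asymptotics.isLittleO_pow_id one_lt_two)
  have hsmall : ∀ᶠ t : ℝ in 𝓝 0, |t| * ‖u‖ < 1 :=
    (continuous_abs.mul continuous_const).continuousAt.eventually_lt continuousAt_const
      (by simp)
  refine Asymptotics.IsBigO.of_bound (‖u‖ ^ 2) ?_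
  filter_upwards [hsmall] with t ht
  rw [Real.norm_eq_abs, abs_pow, sq_abs]
  exact norm_expICf_smul_sub_le hu ht.le

theorem apply_ofReal_eq_zero_of_apply_expICf_smul_eq_zero (μ : UCb X →L[ℂ] ℂ)
    {u : X →ᵇ ℝ} (hu : UniformContinuous u)
    (h : ∀ t : ℝ, μ (expICf (hu.const_smul t)) = 0) :
    μ (UCb.ofReal u hu) = 0 := by
  have hderiv := (μ.restrictScalars ℝ).hasFDerivAt.comp_hasDerivAt (0 : ℝ)
    (hasDerivAt_expICf_smul hu)
  have hconst : (μ.restrictScalars ℝ) ∘ (fun t : ℝ => expICf (hu.const_smul t)) =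
      fun _ => 0 := funext h
  rw [hconst] at hderiv
  simpa using hderiv.unique (hasDerivAt_const 0 0)

theorem fourier_transform_injective_general {X : Type*} [UniformSpace X]
    (μ : UCb X →L[ℂ] ℂ)
    (h : ∀ (f : X → ℝ) (hf : UniformContinuous f), μ (expICf hf) = 0) :
    μ = 0 := by
  ext g
  have vanish (u : X →ᵇ ℝ) (hu : UniformContinuous u) : μ (UCb.ofReal u hu) = 0 :=
    apply_ofReal_eq_zero_of_apply_expICf_smul_eq_zero μ hu fun t => h _ _
  rw [UCb.eq_ofReal_re_add_I_smul_ofReal_im g, map_add, map_smul, vanish, vanish]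
  simp

/-- If a continuous linear functional `μ` on `UCb(X)` (i.e. a generalized measure
`μ ∈ M(X)`) satisfies `⟨μ, e^{if}⟩ = 0` for every uniformly continuous `f : X → ℝ`,
then `μ = 0`; that is, the Fourier transform on `M(X)` is injective. -/
theorem fourier_transform_injective {X : Type*} [UniformSpace X] [T2Space X]
    (μ : UCb X →L[ℂ] ℂ)
    (h : ∀ (f : X → ℝ) (hf : UniformContinuous f), μ (expICf hf) = 0) :
    μ = 0 :=
  fourier_transform_injective_general μ h

end
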